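/- arXiv:1907.03114 — 3 statements merged into one kernel-verified Lean document; each statement's English description precedes it below -/
import Mathlib

section
/- Let F : ℝ³ → ℂ be integrable with |x|F integrable, and suppose F is odd, i.e. F(−x) = −F(x) for all x ∈ ℝ³. Then for every ξ ∈ ℝ³, the Fourier transform satisfies |𝓕F(ξ)| ≤ 2π·|ξ|·‖|x|F‖_{L¹}. -/
open MeasureTheory FourierTransform
open scoped Real RealInnerProductSpace

noncomputable section

local notation "E³" => EuclideanSpace ℝ (Fin 3)

lemma abs_exp_I_sub_one_le (θ : ℝ) :
    ‖Complex.exp (θ * Complex.I) - 1‖ ≤ |θ| := by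
  calc ‖Complex.exp (θ * Complex.I) - 1‖
      = Real.sqrt ((Real.cos θ - 1) ^ 2 + (Real.sin θ) ^ 2) := by
        rw [Complex.exp_mul_I, ← Complex.ofReal_cos, ← Complex.ofReal_sin,
          show (Real.cos θ : ℂ) + (Real.sin θ : ℂ) * Complex.I - 1
            = ((Real.cos θ - 1 : ℝ) : ℂ) + ((Real.sin θ : ℝ) : ℂ) * Complex.I by
            push_cast; ring]
        exact Complex.norm_add_mul_I _ _
    _ ≤ |θ| := by
        rw [← Real.sqrt_sq_eq_abs]
        apply Real.sqrt_le_sqrt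
        have h1 := Real.one_sub_sq_div_two_le_cos (x := θ)
        have h2 := Real.sin_sq_add_cos_sq θ
        nlinarith

/-- Pointwise Fourier bound for odd integrable functions:
`|𝓕F(ξ)| ≤ 2π |ξ| ‖|x|F‖_{L¹}`. -/
theorem fourier_bound_of_odd (F : E³ → ℂ)
    (hF : Integrable F (volume : Measure E³))
    (hxF : Integrable (fun x : E³ => ‖x‖ * ‖F x‖) (volume : Measure E³))
    (hodd : ∀ x : E³, F (-x) = -F x) :
    ∀ ξ : E³, ‖𝓕 F ξ‖ ≤ 2 * π * ‖ξ‖ * ∫ x : E³, ‖x‖ * ‖F x‖ := by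
  intro ξ
  have h0 : ∫ x : E³, F x = 0 := by
    have h1 : ∫ x : E³, F (-x) = ∫ x : E³, F x := integral_neg_eq_self F volume
    simp_rw [hodd, integral_neg] at h1
    linear_combination (-1/2 : ℂ) * h1
  have hcont : Continuous fun x : E³ => ((Real.fourierChar (-⟪x, ξ⟫) : Circle) : ℂ) := by
    exact continuous_subtype_val.comp (Real.continuous_fourierChar.comp
      ((continuous_inner.comp (Continuous.prodMk continuous_id continuous_const)).neg))
  have hsub : Integrable (fun x : E³ =>
      (((Real.fourierChar (-⟪x, ξ⟫) : Circle) : ℂ) - 1) * F x) volume := by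
    apply hF.bdd_mul ((hcont.sub continuous_const).aestronglyMeasurable)
    refine Filter.Eventually.of_forall (fun x => ?_)
    calc ‖((Real.fourierChar (-⟪x, ξ⟫) : Circle) : ℂ) - 1‖
        ≤ ‖((Real.fourierChar (-⟪x, ξ⟫) : Circle) : ℂ)‖ + ‖(1 : ℂ)‖ := norm_sub_le _ _
      _ ≤ 2 := by rw [Circle.norm_coe, norm_one]; norm_num
  have hint : Integrable (fun v : E³ => (Real.fourierChar (-⟪v, ξ⟫) : Circle) • F v) volume := by
    refine ⟨(hcont.aestronglyMeasurable.smul hF.1 : _), ?_⟩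
    apply hF.2.congr'
    filter_upwards with x
    simp [Circle.smul_def, norm_mul, Circle.norm_coe]
  have key : 𝓕 F ξ = ∫ x : E³, (((Real.fourierChar (-⟪x, ξ⟫) : Circle) : ℂ) - 1) * F x := by
    rw [Real.fourier_eq, ← sub_zero (∫ v : E³, (Real.fourierChar (-⟪v, ξ⟫) : Circle) • F v),
      ← h0, ← integral_sub hint hF]
    congr 1
    ext x
    rw [Circle.smul_def, smul_eq_mul]
    ring
  have hbound : ∀ x : E³,
      ‖(((Real.fourierChar (-⟪x, ξ⟫) : Circle) : ℂ) - 1) * F x‖ ≤ 2 * π * ‖ξ‖ * (‖x‖ * ‖F x‖) := by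
    intro x
    rw [norm_mul]
    have h1 : ‖((Real.fourierChar (-⟪x, ξ⟫) : Circle) : ℂ) - 1‖ ≤ 2 * π * ‖x‖ * ‖ξ‖ := by
      rw [Real.fourierChar_apply]
      calc ‖Complex.exp ((2 * π * -⟪x, ξ⟫ : ℝ) * Complex.I) - 1‖
          ≤ |2 * π * -⟪x, ξ⟫| := abs_exp_I_sub_one_le _
        _ = 2 * π * |⟪x, ξ⟫| := by
            rw [abs_mul, abs_neg, abs_of_nonneg (by positivity : (0:ℝ) ≤ 2 * π)]
        _ ≤ 2 * π * (‖x‖ * ‖ξ‖) := by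
            have := abs_real_inner_le_norm x ξ
            nlinarith [Real.pi_pos]
        _ = 2 * π * ‖x‖ * ‖ξ‖ := by ring
    calc ‖((Real.fourierChar (-⟪x, ξ⟫) : Circle) : ℂ) - 1‖ * ‖F x‖
        ≤ (2 * π * ‖x‖ * ‖ξ‖) * ‖F x‖ :=
          mul_le_mul_of_nonneg_right h1 (norm_nonneg _)
      _ = 2 * π * ‖ξ‖ * (‖x‖ * ‖F x‖) := by ring
  rw [key]
  calc ‖∫ x : E³, (((Real.fourierChar (-⟪x, ξ⟫) : Circle) : ℂ) - 1) * F x‖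
      ≤ ∫ x : E³, 2 * π * ‖ξ‖ * (‖x‖ * ‖F x‖) :=
        norm_integral_le_of_norm_le (hxF.const_mul _) (Filter.Eventually.of_forall hbound)
    _ = 2 * π * ‖ξ‖ * ∫ x : E³, ‖x‖ * ‖F x‖ := integral_const_mul _ _
end
end

section
/- Let r > 0. There exists a constant C > 0 such that for every integrable F : ℝ³ → ℂ with |x|F integrable and F odd (F(−x) = −F(x) for all x), one has (∫_{0 < |ξ| ≤ r} |ξ|^{−4} |𝓕F(ξ)|² dξ)^{1/2} ≤ C ‖|x|F‖_{L¹}. -/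
open MeasureTheory FourierTransform
open scoped ENNReal NNReal

noncomputable section

local notation "E³" => EuclideanSpace ℝ (Fin 3)

open Real Complex
open scoped RealInnerProductSpace

lemma norm_exp_mul_I_sub_one_le (t : ℝ) : ‖Complex.exp (t * Complex.I) - 1‖ ≤ |t| := by
  have hd : ∀ s : ℝ, s ∈ (Set.univ : Set ℝ) → HasDerivWithinAt
      (fun s : ℝ => Complex.exp ((s : ℂ) * Complex.I))
      (Complex.exp ((s : ℂ) * Complex.I) * Complex.I) Set.univ s := by
    intro s _
    have h1 : HasDerivAt (fun s : ℝ => (s : ℂ) * Complex.I) Complex.I s := by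
      simpa using (Complex.ofRealCLM.hasDerivAt (x := s)).mul_const Complex.I
    exact (h1.cexp).hasDerivWithinAt
  have hb : ∀ s : ℝ, s ∈ (Set.univ : Set ℝ) →
      ‖Complex.exp ((s : ℂ) * Complex.I) * Complex.I‖ ≤ 1 := by
    intro s _
    rw [norm_mul, Complex.norm_exp, Complex.norm_I]
    simp
  have := convex_univ.norm_image_sub_le_of_norm_hasDerivWithin_le hd hb
    (Set.mem_univ (0 : ℝ)) (Set.mem_univ t)
  simpa [Real.norm_eq_abs] using this

lemma norm_fourierChar_sub_one_le (t : ℝ) :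
    ‖(Real.fourierChar t : ℂ) - 1‖ ≤ 2 * π * |t| := by
  rw [Real.fourierChar_apply]
  calc ‖Complex.exp ((2 * π * t : ℝ) * Complex.I) - 1‖ ≤ |2 * π * t| :=
        norm_exp_mul_I_sub_one_le _
    _ = 2 * π * |t| := by
        rw [abs_mul, _root_.abs_of_nonneg (by positivity : (0:ℝ) ≤ 2 * π)]

set_option maxHeartbeats 2000000 in
/-- Low-frequency weighted bound on the Fourier transform of an odd function:
`(∫_{0<|ξ|≤r} |ξ|^{-4} |𝓕F(ξ)|² dξ)^{1/2} ≤ C ‖|x|F‖_{L¹}`. -/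
theorem low_frequency_fourier_bound (r : ℝ) (hr : 0 < r) :
    ∃ C : ℝ, 0 < C ∧ ∀ F : E³ → ℂ,
      Integrable F (volume : Measure E³) →
      Integrable (fun x : E³ => ‖x‖ * ‖F x‖) (volume : Measure E³) →
      (∀ x : E³, F (-x) = -F x) →
      (∫⁻ ξ : E³ in {ξ : E³ | 0 < ‖ξ‖ ∧ ‖ξ‖ ≤ r},
          (‖𝓕 F ξ‖₊ : ℝ≥0∞) ^ 2 / (‖ξ‖₊ : ℝ≥0∞) ^ 4) ^ (1/2 : ℝ) ≤
        ENNReal.ofReal (C * ∫ x : E³, ‖x‖ * ‖F x‖) := by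
  classical
  set S : Set E³ := {ξ : E³ | 0 < ‖ξ‖ ∧ ‖ξ‖ ≤ r} with hS_def
  set g : E³ → ℝ≥0∞ := fun ξ => ENNReal.ofReal ((‖ξ‖⁻¹) ^ 2) with hg_def
  -- the constant: K = ∫⁻_S ‖ξ‖⁻² is finite
  set K : ℝ≥0∞ := ∫⁻ ξ in S, g ξ with hK_def
  set V : ℝ≥0∞ := volume (Metric.ball (0 : E³) 1) with hV_def
  have hV_ne_top : V ≠ ∞ := (measure_ball_lt_top).ne
  -- annuli
  set A : ℕ → Set E³ := fun n => {ξ : E³ | r / 2 ^ (n + 1) < ‖ξ‖ ∧ ‖ξ‖ ≤ r / 2 ^ n} with hA_def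
  have hSA : S ⊆ ⋃ n, A n := by
    intro ξ hξ
    obtain ⟨hb, hbr⟩ := hξ
    set b := ‖ξ‖
    have ht1 : (1 : ℝ) ≤ r / b := (one_le_div hb).2 hbr
    set m := ⌊r / b⌋₊ with hm_def
    have hm1 : 1 ≤ m := Nat.le_floor (by exact_mod_cast ht1)
    set n := Nat.log 2 m with hn_def
    have h1 : (2 : ℝ) ^ n ≤ r / b := by
      calc (2 : ℝ) ^ n = ((2 ^ n : ℕ) : ℝ) := by push_cast; ring
        _ ≤ (m : ℝ) := by exact_mod_cast Nat.pow_log_le_self 2 (by omega)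
        _ ≤ r / b := Nat.floor_le (by linarith)
    have h2 : r / b < (2 : ℝ) ^ (n + 1) := by
      have := Nat.lt_pow_succ_log_self (by norm_num : 1 < 2) m
      calc r / b < (m : ℝ) + 1 := Nat.lt_floor_add_one _
        _ ≤ ((2 ^ (n + 1) : ℕ) : ℝ) := by exact_mod_cast this
        _ = (2 : ℝ) ^ (n + 1) := by push_cast; ring
    refine Set.mem_iUnion.2 ⟨n, ?_, ?_⟩
    · rw [div_lt_iff₀ (by positivity)]
      rw [div_lt_iff₀ hb] at h2
      linarith [h2]
    · rw [le_div_iff₀ (by positivity : (0:ℝ) < (2:ℝ) ^ n)]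
      rw [le_div_iff₀ hb] at h1
      linarith [h1]
  have hA_meas : ∀ n, MeasurableSet (A n) := by
    intro n
    exact (measurableSet_lt measurable_const measurable_norm).inter
      (measurableSet_le measurable_norm measurable_const)
  have hK_term : ∀ n : ℕ, (∫⁻ ξ in A n, g ξ) ≤ ENNReal.ofReal (4 * r) * (ENNReal.ofReal (1/2)) ^ n * V := by
    intro n
    have hbound : ∀ ξ ∈ A n, g ξ ≤ ENNReal.ofReal (((2:ℝ) ^ (n+1) / r) ^ 2) := by
      intro ξ hξ
      obtain ⟨h1, _⟩ := hξ
      have hpos : (0:ℝ) < r / 2 ^ (n+1) := by positivity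
      have hξpos : (0:ℝ) < ‖ξ‖ := lt_trans hpos h1
      apply ENNReal.ofReal_le_ofReal
      have hinv : ‖ξ‖⁻¹ ≤ (r / 2 ^ (n+1))⁻¹ := inv_anti₀ hpos h1.le
      have hinv2 : (r / 2 ^ (n+1))⁻¹ = (2:ℝ) ^ (n+1) / r := by
        field_simp
      calc (‖ξ‖⁻¹) ^ 2 ≤ ((r / 2 ^ (n+1))⁻¹) ^ 2 := by
            apply pow_le_pow_left₀ (by positivity) hinv
        _ = ((2:ℝ) ^ (n+1) / r) ^ 2 := by rw [hinv2]
    calc (∫⁻ ξ in A n, g ξ) ≤ ∫⁻ _ in A n, ENNReal.ofReal (((2:ℝ) ^ (n+1) / r) ^ 2) :=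
          setLIntegral_mono' (hA_meas n) hbound
      _ = ENNReal.ofReal (((2:ℝ) ^ (n+1) / r) ^ 2) * volume (A n) := setLIntegral_const _ _
      _ ≤ ENNReal.ofReal (((2:ℝ) ^ (n+1) / r) ^ 2) *
            volume (Metric.closedBall (0 : E³) (r / 2 ^ n)) := by
          apply mul_le_mul_right
          apply measure_mono
          intro ξ hξ
          simp only [Metric.mem_closedBall, dist_zero_right]
          exact hξ.2
      _ = ENNReal.ofReal (((2:ℝ) ^ (n+1) / r) ^ 2) *
            (ENNReal.ofReal ((r / 2 ^ n) ^ (Module.finrank ℝ E³)) * V) := by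
          rw [Measure.addHaar_closedBall volume 0 (by positivity : (0:ℝ) ≤ r / 2 ^ n)]
      _ = ENNReal.ofReal (4 * r) * (ENNReal.ofReal (1/2)) ^ n * V := by
          have hfr : Module.finrank ℝ E³ = 3 := by
            simp [finrank_euclideanSpace]
          rw [hfr, ← mul_assoc, ← ENNReal.ofReal_mul (by positivity), ← ENNReal.ofReal_pow (by norm_num),
            ← ENNReal.ofReal_mul (by positivity)]
          congr 2
          rw [one_div, inv_pow]
          field_simp
          ring
  have hK_le : K ≤ ENNReal.ofReal (4 * r) * (1 - ENNReal.ofReal (1/2))⁻¹ * V := by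
    calc K ≤ ∫⁻ ξ in ⋃ n, A n, g ξ := lintegral_mono_set hSA
      _ ≤ ∑' n, ∫⁻ ξ in A n, g ξ := lintegral_iUnion_le _ _
      _ ≤ ∑' n, ENNReal.ofReal (4 * r) * (ENNReal.ofReal (1/2)) ^ n * V :=
          ENNReal.tsum_le_tsum hK_term
      _ = ENNReal.ofReal (4 * r) * (∑' n, (ENNReal.ofReal (1/2)) ^ n) * V := by
          rw [ENNReal.tsum_mul_right, ENNReal.tsum_mul_left]
      _ = ENNReal.ofReal (4 * r) * (1 - ENNReal.ofReal (1/2))⁻¹ * V := by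
          rw [ENNReal.tsum_geometric]
  have hhalf : (1 : ℝ≥0∞) - ENNReal.ofReal (1/2) ≠ 0 := by
    rw [← pos_iff_ne_zero, tsub_pos_iff_lt]
    exact ENNReal.ofReal_lt_one.2 (by norm_num)
  have hK_ne_top : K ≠ ∞ := by
    apply ne_top_of_le_ne_top _ hK_le
    exact ENNReal.mul_ne_top (ENNReal.mul_ne_top ENNReal.ofReal_ne_top
      (ENNReal.inv_ne_top.2 hhalf)) hV_ne_top
  -- the constant
  set k : ℝ := (K ^ (1/2 : ℝ)).toReal with hk_def
  have hk_nonneg : 0 ≤ k := ENNReal.toReal_nonneg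
  refine ⟨2 * π * k + 1, by positivity, ?_⟩
  intro F hF hF1 hodd
  set M : ℝ := ∫ x : E³, ‖x‖ * ‖F x‖ with hM_def
  have hM_nonneg : 0 ≤ M :=
    integral_nonneg fun x => mul_nonneg (norm_nonneg _) (norm_nonneg _)
  -- the integral of F vanishes
  have hF0 : (∫ x : E³, F x) = 0 := by
    have h1 : (∫ x : E³, F (-x)) = ∫ x : E³, F x := integral_neg_eq_self F volume
    have h2 : (∫ x : E³, F (-x)) = - ∫ x : E³, F x := by
      simp_rw [hodd]
      exact integral_neg _
    have h3 := h1.symm.trans h2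
    exact add_self_eq_zero.mp (by linear_combination h3)
  -- pointwise Fourier bound
  have key : ∀ ξ : E³, ‖𝓕 F ξ‖ ≤ 2 * π * M * ‖ξ‖ := by
    intro ξ
    have hconv : Integrable (fun v : E³ => (Real.fourierChar (-⟪v, ξ⟫) : Circle) • F v) volume :=
      (Real.fourierIntegral_convergent_iff ξ).2 hF
    have heq : 𝓕 F ξ = ∫ v : E³, ((Real.fourierChar (-⟪v, ξ⟫) : ℂ) - 1) * F v := by
      rw [Real.fourier_eq]
      rw [← sub_zero (∫ v : E³, (Real.fourierChar (-⟪v, ξ⟫) : Circle) • F v), ← hF0,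
        ← integral_sub hconv hF]
      congr 1
      ext v
      rw [Circle.smul_def, smul_eq_mul]
      ring
    rw [heq]
    have hnorm : ∀ v : E³, ‖((Real.fourierChar (-⟪v, ξ⟫) : ℂ) - 1) * F v‖ ≤
        2 * π * ‖ξ‖ * (‖v‖ * ‖F v‖) := by
      intro v
      rw [norm_mul]
      calc ‖((Real.fourierChar (-⟪v, ξ⟫) : ℂ) - 1)‖ * ‖F v‖
          ≤ (2 * π * |(-⟪v, ξ⟫)|) * ‖F v‖ := by
            apply mul_le_mul_of_nonneg_right (norm_fourierChar_sub_one_le _) (norm_nonneg _)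
        _ ≤ (2 * π * (‖v‖ * ‖ξ‖)) * ‖F v‖ := by
            apply mul_le_mul_of_nonneg_right _ (norm_nonneg _)
            apply mul_le_mul_of_nonneg_left _ (by positivity)
            rw [abs_neg]
            exact abs_real_inner_le_norm v ξ
        _ = 2 * π * ‖ξ‖ * (‖v‖ * ‖F v‖) := by ring
    calc ‖∫ v : E³, ((Real.fourierChar (-⟪v, ξ⟫) : ℂ) - 1) * F v‖
        ≤ ∫ v : E³, ‖((Real.fourierChar (-⟪v, ξ⟫) : ℂ) - 1) * F v‖ :=
          norm_integral_le_integral_norm _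
      _ ≤ ∫ v : E³, 2 * π * ‖ξ‖ * (‖v‖ * ‖F v‖) := by
          apply integral_mono_of_nonneg
          · exact Filter.Eventually.of_forall fun v => norm_nonneg _
          · exact hF1.const_mul _
          · exact Filter.Eventually.of_forall hnorm
      _ = 2 * π * ‖ξ‖ * M := integral_const_mul _ _
      _ = 2 * π * M * ‖ξ‖ := by ring
  -- pointwise bound on the weighted integrand
  have hpoint : ∀ ξ ∈ S, (‖𝓕 F ξ‖₊ : ℝ≥0∞) ^ 2 / (‖ξ‖₊ : ℝ≥0∞) ^ 4 ≤
      ENNReal.ofReal (2 * π * M) ^ 2 * g ξ := by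
    intro ξ hξ
    obtain ⟨hb, _⟩ := hξ
    have hnum : (‖𝓕 F ξ‖₊ : ℝ≥0∞) ^ 2 ≤ ENNReal.ofReal ((2 * π * M) ^ 2 * ‖ξ‖ ^ 2) := by
      rw [← enorm_eq_nnnorm, ← ofReal_norm, ← ENNReal.ofReal_pow (norm_nonneg _)]
      apply ENNReal.ofReal_le_ofReal
      calc ‖𝓕 F ξ‖ ^ 2 ≤ (2 * π * M * ‖ξ‖) ^ 2 := by
            apply pow_le_pow_left₀ (norm_nonneg _) (key ξ)
        _ = (2 * π * M) ^ 2 * ‖ξ‖ ^ 2 := by ring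
    have hden : ((‖ξ‖₊ : ℝ≥0∞)) ^ 4 = ENNReal.ofReal (‖ξ‖ ^ 4) := by
      rw [← enorm_eq_nnnorm, ← ofReal_norm, ← ENNReal.ofReal_pow (norm_nonneg _)]
    have hsplit : ENNReal.ofReal ((2 * π * M) ^ 2 * (‖ξ‖⁻¹) ^ 2) =
        ENNReal.ofReal (2 * π * M) ^ 2 * g ξ := by
      rw [hg_def, ENNReal.ofReal_mul (sq_nonneg _),
        ENNReal.ofReal_pow (mul_nonneg (by positivity) hM_nonneg)]
    calc (‖𝓕 F ξ‖₊ : ℝ≥0∞) ^ 2 / (‖ξ‖₊ : ℝ≥0∞) ^ 4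
        ≤ ENNReal.ofReal ((2 * π * M) ^ 2 * ‖ξ‖ ^ 2) / ENNReal.ofReal (‖ξ‖ ^ 4) := by
          rw [hden]
          exact ENNReal.div_le_div_right hnum _
      _ = ENNReal.ofReal ((2 * π * M) ^ 2 * ‖ξ‖ ^ 2 / ‖ξ‖ ^ 4) := by
          rw [ENNReal.ofReal_div_of_pos (pow_pos hb 4)]
      _ = ENNReal.ofReal ((2 * π * M) ^ 2 * (‖ξ‖⁻¹) ^ 2) := by
          congr 1
          rw [mul_div_assoc]
          congr 1
          field_simp [ne_of_gt hb]
      _ = ENNReal.ofReal (2 * π * M) ^ 2 * g ξ := hsplit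
  -- conclude
  have hmain : (∫⁻ ξ in S, (‖𝓕 F ξ‖₊ : ℝ≥0∞) ^ 2 / (‖ξ‖₊ : ℝ≥0∞) ^ 4) ≤
      ENNReal.ofReal (2 * π * M) ^ 2 * K := by
    have hS_meas : MeasurableSet S :=
      (measurableSet_lt measurable_const measurable_norm).inter
        (measurableSet_le measurable_norm measurable_const)
    calc (∫⁻ ξ in S, (‖𝓕 F ξ‖₊ : ℝ≥0∞) ^ 2 / (‖ξ‖₊ : ℝ≥0∞) ^ 4)
        ≤ ∫⁻ ξ in S, ENNReal.ofReal (2 * π * M) ^ 2 * g ξ := setLIntegral_mono' hS_meas hpoint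
      _ = ENNReal.ofReal (2 * π * M) ^ 2 * K := lintegral_const_mul' _ _ (by
          exact ENNReal.pow_ne_top ENNReal.ofReal_ne_top)
  calc (∫⁻ ξ in S, (‖𝓕 F ξ‖₊ : ℝ≥0∞) ^ 2 / (‖ξ‖₊ : ℝ≥0∞) ^ 4) ^ (1/2 : ℝ)
      ≤ (ENNReal.ofReal (2 * π * M) ^ 2 * K) ^ (1/2 : ℝ) :=
        ENNReal.rpow_le_rpow hmain (by norm_num)
    _ = (ENNReal.ofReal (2 * π * M) ^ 2) ^ (1/2 : ℝ) * K ^ (1/2 : ℝ) :=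
        ENNReal.mul_rpow_of_nonneg _ _ (by norm_num)
    _ = ENNReal.ofReal (2 * π * M) * K ^ (1/2 : ℝ) := by
        rw [← ENNReal.rpow_natCast (ENNReal.ofReal (2 * π * M)) 2, ← ENNReal.rpow_mul]
        norm_num
    _ ≤ ENNReal.ofReal (2 * π * M) * ENNReal.ofReal k := by
        apply mul_le_mul_right
        rw [hk_def, ENNReal.ofReal_toReal (ENNReal.rpow_ne_top_of_nonneg (by norm_num) hK_ne_top)]
    _ = ENNReal.ofReal (2 * π * M * k) := by
        exact (ENNReal.ofReal_mul
          (mul_nonneg (mul_nonneg (by norm_num) Real.pi_pos.le) hM_nonneg)).symm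

    _ ≤ ENNReal.ofReal ((2 * π * k + 1) * M) := by
        apply ENNReal.ofReal_le_ofReal
        nlinarith [hM_nonneg, hk_nonneg, Real.pi_pos]
end
end

section
/- There exists a constant C > 0 such that for every continuously differentiable, compactly supported function u : ℝ³ → ℂ, one has ∫_{ℝ³} (1+|x|)|u(x)|³ dx ≤ C ‖u‖_{L²}^{3/2} ‖∇u‖_{L²}^{1/2} (‖∇u‖_{L²} + ‖|x|∇u‖_{L²}). -/
open MeasureTheory
open scoped ENNReal NNReal

noncomputable section

local notation "E³" => EuclideanSpace ℝ (Fin 3)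

namespace WeightedTrilinearAux

set_option maxHeartbeats 1000000

lemma coord_le_norm (x : E³) (i : Fin 3) : |x i| ≤ ‖x‖ := by
  rw [EuclideanSpace.norm_eq, show |x i| = √((x i)^2) from (Real.sqrt_sq_eq_abs _).symm]
  apply Real.sqrt_le_sqrt
  simp only [Real.norm_eq_abs, sq_abs]
  exact Finset.single_le_sum (fun j _ => sq_nonneg (x j)) (Finset.mem_univ i)

lemma norm_le_sum_coord (x : E³) : ‖x‖ ≤ ∑ i : Fin 3, |x i| := by
  rw [EuclideanSpace.norm_eq]
  simp only [Real.norm_eq_abs]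
  rw [show ∑ i : Fin 3, |x i| = √((∑ i : Fin 3, |x i|)^2) from
    (Real.sqrt_sq (by positivity)).symm]
  apply Real.sqrt_le_sqrt
  simp [Fin.sum_univ_three]
  nlinarith [abs_nonneg (x 0), abs_nonneg (x 1), abs_nonneg (x 2), sq_abs (x 0), sq_abs (x 1),
    sq_abs (x 2), abs_mul (x 0) (x 1), abs_mul (x 0) (x 2), abs_mul (x 1) (x 2),
    abs_mul_abs_self (x 0), abs_mul_abs_self (x 1), abs_mul_abs_self (x 2)]

lemma fderiv_coord_smul_bound (u : E³ → ℂ) (hu : ContDiff ℝ 1 u) (i : Fin 3) (x : E³) :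
    ‖fderiv ℝ (fun y : E³ => (y i) • u y) x‖ ≤ ‖u x‖ + ‖x‖ * ‖fderiv ℝ u x‖ := by
  have hproj : HasFDerivAt (fun y : E³ => y i) (EuclideanSpace.proj (𝕜 := ℝ) i) x :=
    (EuclideanSpace.proj (𝕜 := ℝ) i).hasFDerivAt
  have hd := hproj.smul (hu.differentiable one_ne_zero x).hasFDerivAt
  rw [show (fun y : E³ => (y i) • u y) = (fun y : E³ => y i) • u from rfl, hd.fderiv]
  have hprojn : ‖(EuclideanSpace.proj (𝕜 := ℝ) i : E³ →L[ℝ] ℝ)‖ ≤ 1 := by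
    apply ContinuousLinearMap.opNorm_le_bound _ zero_le_one
    intro y
    rw [one_mul]
    simpa using coord_le_norm y i
  calc ‖(x i) • fderiv ℝ u x + (EuclideanSpace.proj (𝕜 := ℝ) i).smulRight (u x)‖
      ≤ ‖(x i) • fderiv ℝ u x‖ + ‖(EuclideanSpace.proj (𝕜 := ℝ) i).smulRight (u x)‖ :=
        norm_add_le _ _
    _ ≤ ‖x‖ * ‖fderiv ℝ u x‖ + 1 * ‖u x‖ := by
        apply add_le_add
        · refine le_trans (ContinuousLinearMap.opNorm_smul_le _ _) ?_
          rw [Real.norm_eq_abs]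
          exact mul_le_mul_of_nonneg_right (coord_le_norm x i) (norm_nonneg _)
        · rw [ContinuousLinearMap.norm_smulRight_apply]
          exact mul_le_mul_of_nonneg_right hprojn (norm_nonneg _)
    _ = ‖u x‖ + ‖x‖ * ‖fderiv ℝ u x‖ := by ring

lemma pointwise_ray (u : E³ → ℂ) (hu : ContDiff ℝ 1 u) (h2u : HasCompactSupport u)
    {x : E³} (hx : x ≠ 0) :
    ENNReal.ofReal (‖u x‖^2) ≤
      ∫⁻ t in Set.Ioi (1:ℝ), ENNReal.ofReal (2 * ‖x‖ * ‖u (t • x)‖ * ‖fderiv ℝ u (t • x)‖) := by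
  obtain ⟨R, hR⟩ := h2u.isCompact.isBounded.subset_closedBall 0
  have hxn : 0 < ‖x‖ := norm_pos_iff.2 hx
  set T : ℝ := max 2 ((R+1)/‖x‖) with hTdef
  have hT1 : (1:ℝ) < T := lt_of_lt_of_le one_lt_two (le_max_left _ _)
  have hTx : u (T • x) = 0 := by
    apply image_eq_zero_of_notMem_tsupport
    intro hmem
    have h1 := hR hmem
    rw [Metric.mem_closedBall, dist_zero_right, norm_smul] at h1
    have h2 : (R+1)/‖x‖ ≤ T := le_max_right _ _
    have h3 : R + 1 ≤ T * ‖x‖ := (div_le_iff₀ hxn).mp h2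
    have h4 : 0 < T := lt_trans one_pos hT1
    rw [Real.norm_eq_abs, abs_of_pos h4] at h1
    linarith
  have hud := hu.differentiable one_ne_zero
  set ψ' : ℝ → ℂ := fun t => fderiv ℝ u (t • x) x with hψ'def
  have hψ : ∀ t : ℝ, HasDerivAt (fun s : ℝ => u (s • x)) (ψ' t) t := by
    intro t
    have h1 : HasDerivAt (fun s : ℝ => s • x) x t := by
      simpa using (hasDerivAt_id t).smul_const x
    exact ((hud (t • x)).hasFDerivAt.comp_hasDerivAt t h1)
  set φ' : ℝ → ℝ := fun t => 2 * ((starRingEnd ℂ) (u (t • x)) * ψ' t).re with hφ'def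
  have hφ : ∀ t : ℝ, HasDerivAt (fun s : ℝ => ‖u (s • x)‖^2) (φ' t) t := by
    intro t
    have ha : HasDerivAt (fun s : ℝ => (u (s • x)).re) ((ψ' t).re) t :=
      (Complex.reCLM.hasFDerivAt.comp_hasDerivAt t (hψ t))
    have hb : HasDerivAt (fun s : ℝ => (u (s • x)).im) ((ψ' t).im) t :=
      (Complex.imCLM.hasFDerivAt.comp_hasDerivAt t (hψ t))
    have h2 := (ha.mul ha).add (hb.mul hb)
    have heq : (fun s : ℝ => ‖u (s • x)‖^2) =
        fun s : ℝ => (u (s • x)).re * (u (s • x)).re + (u (s • x)).im * (u (s • x)).im := by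
      funext s
      rw [Complex.sq_norm, Complex.normSq_apply]
    rw [heq]
    convert h2 using 1
    · rfl
    · rfl
    · rfl
    rw [hφ'def]; simp [Complex.mul_re]
    ring
  have hcsmul : Continuous (fun t : ℝ => t • x) := continuous_id.smul continuous_const
  have hcfd : Continuous (fun t : ℝ => fderiv ℝ u (t • x)) :=
    (hu.continuous_fderiv one_ne_zero).comp hcsmul
  have hcψ' : Continuous ψ' := by
    rw [hψ'def]
    exact hcfd.clm_apply continuous_const
  have hcu : Continuous (fun t : ℝ => u (t • x)) := hu.continuous.comp hcsmul
  have hcφ' : Continuous φ' := by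
    rw [hφ'def]
    fun_prop
  set g : ℝ → ℝ := fun t => 2 * ‖x‖ * ‖u (t • x)‖ * ‖fderiv ℝ u (t • x)‖ with hgdef
  have hcg : Continuous g := by rw [hgdef]; fun_prop
  have habs : ∀ t : ℝ, |φ' t| ≤ g t := by
    intro t
    rw [hφ'def, hgdef]
    simp only [abs_mul, abs_two]
    have h1 : |((starRingEnd ℂ) (u (t • x)) * ψ' t).re| ≤ ‖u (t • x)‖ * ‖ψ' t‖ := by
      calc |((starRingEnd ℂ) (u (t • x)) * ψ' t).re| ≤ ‖(starRingEnd ℂ) (u (t • x)) * ψ' t‖ :=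
            Complex.abs_re_le_norm _
        _ = ‖u (t • x)‖ * ‖ψ' t‖ := by rw [norm_mul, RCLike.norm_conj]
    have h2 : ‖ψ' t‖ ≤ ‖fderiv ℝ u (t • x)‖ * ‖x‖ := by
      rw [hψ'def]; exact (fderiv ℝ u (t • x)).le_opNorm x
    have h3 : (0:ℝ) ≤ ‖u (t • x)‖ := norm_nonneg _
    nlinarith [norm_nonneg (ψ' t), norm_nonneg (fderiv ℝ u (t • x)), norm_nonneg x]
  have hFTC : ∫ t in (1:ℝ)..T, φ' t = ‖u (T • x)‖^2 - ‖u ((1:ℝ) • x)‖^2 :=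
    intervalIntegral.integral_eq_sub_of_hasDerivAt (fun t _ => hφ t)
      (hcφ'.intervalIntegrable 1 T)
  rw [hTx] at hFTC
  simp only [one_smul, norm_zero] at hFTC
  have step1 : ‖u x‖^2 ≤ ∫ t in (1:ℝ)..T, g t := by
    have h1 : ‖u x‖^2 = -∫ t in (1:ℝ)..T, φ' t := by rw [hFTC]; ring
    have h2 : -∫ t in (1:ℝ)..T, φ' t ≤ |∫ t in (1:ℝ)..T, φ' t| := neg_le_abs _
    have h3 : |∫ t in (1:ℝ)..T, φ' t| ≤ ∫ t in (1:ℝ)..T, |φ' t| :=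
      intervalIntegral.abs_integral_le_integral_abs hT1.le
    have h4 : ∫ t in (1:ℝ)..T, |φ' t| ≤ ∫ t in (1:ℝ)..T, g t := by
      apply intervalIntegral.integral_mono_on hT1.le
        (hcφ'.abs.intervalIntegrable 1 T) (hcg.intervalIntegrable 1 T)
      exact fun t _ => habs t
    linarith
  calc ENNReal.ofReal (‖u x‖^2) ≤ ENNReal.ofReal (∫ t in (1:ℝ)..T, g t) :=
        ENNReal.ofReal_le_ofReal step1
    _ = ENNReal.ofReal (∫ t in Set.Ioc (1:ℝ) T, g t) := by
        rw [intervalIntegral.integral_of_le hT1.le]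
    _ ≤ ∫⁻ t in Set.Ioc (1:ℝ) T, ENNReal.ofReal (g t) := by
        rw [ofReal_integral_eq_lintegral_ofReal
          ((hcg.integrableOn_Icc (a := 1) (b := T)).mono_set Set.Ioc_subset_Icc_self)
          (Filter.Eventually.of_forall fun t => by rw [hgdef]; positivity)]
    _ ≤ ∫⁻ t in Set.Ioi (1:ℝ), ENNReal.ofReal (g t) :=
        lintegral_mono_set Set.Ioc_subset_Ioi_self

lemma scaling_inner (u : E³ → ℂ) (hu : ContDiff ℝ 1 u) {t : ℝ} (ht : 1 < t) :
    (∫⁻ x : E³, ENNReal.ofReal (2 * ‖x‖ * ‖u (t • x)‖ * ‖fderiv ℝ u (t • x)‖)) =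
      ENNReal.ofReal (t ^ (-4:ℝ)) *
        ∫⁻ y : E³, ENNReal.ofReal (2 * ‖y‖ * ‖u y‖ * ‖fderiv ℝ u y‖) := by
  have ht0 : (0:ℝ) < t := lt_trans one_pos ht
  set G : E³ → ℝ≥0∞ := fun y => ENNReal.ofReal (2 * ‖y‖ * ‖u y‖ * ‖fderiv ℝ u y‖) with hGdef
  have hGm : Measurable G := by
    rw [hGdef]
    apply ENNReal.measurable_ofReal.comp
    exact (((continuous_const.mul continuous_norm).mul hu.continuous.norm).mul
      (hu.continuous_fderiv one_ne_zero).norm).measurable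
  have h1 : ∀ x : E³, ENNReal.ofReal (2 * ‖x‖ * ‖u (t • x)‖ * ‖fderiv ℝ u (t • x)‖) =
      ENNReal.ofReal t⁻¹ * G (t • x) := by
    intro x
    rw [hGdef, ← ENNReal.ofReal_mul (by positivity)]
    congr 1
    rw [norm_smul, Real.norm_eq_abs, abs_of_pos ht0]
    field_simp
  simp_rw [h1]
  rw [lintegral_const_mul' _ _ ENNReal.ofReal_ne_top]
  have h2 : (∫⁻ x : E³, G (t • x)) =
      ENNReal.ofReal |(t ^ Module.finrank ℝ E³ : ℝ)⁻¹| * ∫⁻ y, G y := by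
    rw [← lintegral_map hGm (measurable_const_smul t), Measure.map_addHaar_smul volume ht0.ne',
      lintegral_smul_measure, smul_eq_mul]
  rw [h2, ← mul_assoc, ← ENNReal.ofReal_mul (by positivity)]
  congr 2
  have h3 : Module.finrank ℝ E³ = 3 := by simp
  rw [h3, abs_of_pos (by positivity)]
  rw [Real.rpow_neg ht0.le]
  rw [show (4:ℝ) = ((4:ℕ):ℝ) by norm_num, Real.rpow_natCast]
  field_simp

lemma lint_rpow : ∫⁻ t in Set.Ioi (1:ℝ), ENNReal.ofReal (t ^ (-4:ℝ)) = ENNReal.ofReal (1/3) := by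
  rw [← ofReal_integral_eq_lintegral_ofReal (integrableOn_Ioi_rpow_of_lt (by norm_num) one_pos)
    (ae_restrict_of_forall_mem measurableSet_Ioi fun t ht =>
      Real.rpow_nonneg (le_trans zero_le_one (le_of_lt ht)) _)]
  rw [integral_Ioi_rpow_of_lt (by norm_num) one_pos]
  norm_num

lemma l2_bound (u : E³ → ℂ) (hu : ContDiff ℝ 1 u) (h2u : HasCompactSupport u) :
    eLpNorm u 2 (volume : Measure E³) ≤
      ENNReal.ofReal (2/3) *
        eLpNorm (fun x : E³ => ‖x‖ * ‖fderiv ℝ u x‖) 2 (volume : Measure E³) := by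
  set N2 := eLpNorm u 2 (volume : Measure E³) with hN2def
  set W := eLpNorm (fun x : E³ => ‖x‖ * ‖fderiv ℝ u x‖) 2 (volume : Measure E³) with hWdef
  have hcfd : Continuous (fderiv ℝ u) := hu.continuous_fderiv one_ne_zero
  have hA : (∫⁻ x : E³, ENNReal.ofReal (‖u x‖^2)) ≤
      ENNReal.ofReal (1/3) * ∫⁻ y : E³, ENNReal.ofReal (2 * ‖y‖ * ‖u y‖ * ‖fderiv ℝ u y‖) := by
    have hae : ∀ᵐ x : E³ ∂volume, x ≠ 0 := by
      have h0 : (volume : Measure E³) {0} = 0 := measure_singleton 0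
      rw [ae_iff]
      convert h0 using 2
      ext x; simp
    have step1 : (∫⁻ x : E³, ENNReal.ofReal (‖u x‖^2)) ≤
        ∫⁻ x : E³, ∫⁻ t in Set.Ioi (1:ℝ),
          ENNReal.ofReal (2 * ‖x‖ * ‖u (t • x)‖ * ‖fderiv ℝ u (t • x)‖) := by
      apply lintegral_mono_ae
      filter_upwards [hae] with x hx
      exact pointwise_ray u hu h2u hx
    have hswap : (∫⁻ x : E³, ∫⁻ t in Set.Ioi (1:ℝ),
          ENNReal.ofReal (2 * ‖x‖ * ‖u (t • x)‖ * ‖fderiv ℝ u (t • x)‖)) =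
        ∫⁻ t in Set.Ioi (1:ℝ), ∫⁻ x : E³,
          ENNReal.ofReal (2 * ‖x‖ * ‖u (t • x)‖ * ‖fderiv ℝ u (t • x)‖) := by
      apply lintegral_lintegral_swap
      apply (Continuous.aemeasurable ?_)
      apply ENNReal.continuous_ofReal.comp
      have hsm : Continuous (fun p : E³ × ℝ => p.2 • p.1) := continuous_snd.smul continuous_fst
      exact ((continuous_const.mul continuous_fst.norm).mul
        (hu.continuous.comp hsm).norm).mul ((hcfd.comp hsm).norm)
    rw [hswap] at step1
    have hcongr : (∫⁻ t in Set.Ioi (1:ℝ), ∫⁻ x : E³,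
          ENNReal.ofReal (2 * ‖x‖ * ‖u (t • x)‖ * ‖fderiv ℝ u (t • x)‖)) =
        ∫⁻ t in Set.Ioi (1:ℝ), ENNReal.ofReal (t ^ (-4:ℝ)) *
          ∫⁻ y : E³, ENNReal.ofReal (2 * ‖y‖ * ‖u y‖ * ‖fderiv ℝ u y‖) := by
      apply setLIntegral_congr_fun measurableSet_Ioi
      intro t ht
      exact scaling_inner u hu ht
    have hm4 : Measurable fun t : ℝ => ENNReal.ofReal (t ^ (-4:ℝ)) := by
      apply ENNReal.measurable_ofReal.comp
      exact measurable_id.pow_const _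
    rw [hcongr, lintegral_mul_const _ hm4, lint_rpow] at step1
    exact step1
  have hCS : (∫⁻ y : E³, ENNReal.ofReal (2 * ‖y‖ * ‖u y‖ * ‖fderiv ℝ u y‖)) ≤
      2 * (N2 * W) := by
    have hpt : ∀ y : E³, ENNReal.ofReal (2 * ‖y‖ * ‖u y‖ * ‖fderiv ℝ u y‖) =
        2 * ((‖u y‖₊ : ℝ≥0∞) * ENNReal.ofReal (‖y‖ * ‖fderiv ℝ u y‖)) := by
      intro y
      rw [show 2 * ‖y‖ * ‖u y‖ * ‖fderiv ℝ u y‖ = 2 * (‖u y‖ * (‖y‖ * ‖fderiv ℝ u y‖)) by ring,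
        ENNReal.ofReal_mul (by norm_num : (0:ℝ) ≤ 2),
        ENNReal.ofReal_mul (norm_nonneg _), ENNReal.ofReal_ofNat,
        ofReal_norm, enorm_eq_nnnorm]
    calc (∫⁻ y : E³, ENNReal.ofReal (2 * ‖y‖ * ‖u y‖ * ‖fderiv ℝ u y‖))
        = ∫⁻ y : E³, 2 * ((‖u y‖₊ : ℝ≥0∞) * ENNReal.ofReal (‖y‖ * ‖fderiv ℝ u y‖)) :=
          lintegral_congr hpt
      _ = 2 * ∫⁻ y : E³, (‖u y‖₊ : ℝ≥0∞) * ENNReal.ofReal (‖y‖ * ‖fderiv ℝ u y‖) :=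
          lintegral_const_mul' _ _ (by norm_num)
      _ ≤ 2 * (N2 * W) := ?_
    gcongr
    have hH := ENNReal.lintegral_mul_le_Lp_mul_Lq (volume : Measure E³)
      (p := 2) (q := 2) ((Real.holderConjugate_iff_eq_conjExponent one_lt_two).2 (by norm_num))
      (f := fun y : E³ => (‖u y‖₊ : ℝ≥0∞))
      (g := fun y : E³ => ENNReal.ofReal (‖y‖ * ‖fderiv ℝ u y‖))
      (hu.continuous.measurable.nnnorm.coe_nnreal_ennreal.aemeasurable)
      ((ENNReal.measurable_ofReal.comp (continuous_norm.mul hcfd.norm).measurable).aemeasurable)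
    refine le_trans (le_of_eq (by rfl)) (le_trans hH ?_)
    have e1 : N2 = (∫⁻ y : E³, (‖u y‖₊ : ℝ≥0∞) ^ (2:ℝ)) ^ (1/(2:ℝ)) := by
      rw [hN2def, eLpNorm_eq_lintegral_rpow_enorm_toReal two_ne_zero ENNReal.ofNat_ne_top]
      simp only [enorm_eq_nnnorm]
      norm_num
    have e2 : W = (∫⁻ y : E³, (ENNReal.ofReal (‖y‖ * ‖fderiv ℝ u y‖)) ^ (2:ℝ)) ^ (1/(2:ℝ)) := by
      rw [hWdef, eLpNorm_eq_lintegral_rpow_enorm_toReal two_ne_zero ENNReal.ofNat_ne_top]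
      simp only [ENNReal.toReal_ofNat, enorm_eq_nnnorm]
      congr 1
      apply lintegral_congr
      intro y
      congr 1
      rw [← enorm_eq_nnnorm, ← ofReal_norm, Real.norm_eq_abs, abs_of_nonneg (by positivity)]
    rw [e1, e2]
  have hsq : N2 * N2 ≤ (ENNReal.ofReal (2/3) * W) * N2 := by
    have e3 : N2 * N2 = ∫⁻ x : E³, ENNReal.ofReal (‖u x‖^2) := by
      have hpt2 : ∀ z : ℂ, (‖z‖₊ : ℝ≥0∞)^(2:ℝ) = ENNReal.ofReal (‖z‖^2) := by
        intro z
        rw [← enorm_eq_nnnorm, ← ofReal_norm,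
          ENNReal.ofReal_rpow_of_nonneg (norm_nonneg _) (by norm_num)]
        norm_num [Real.rpow_natCast]
      rw [hN2def, eLpNorm_eq_lintegral_rpow_enorm_toReal two_ne_zero ENNReal.ofNat_ne_top]
      simp only [ENNReal.toReal_ofNat, enorm_eq_nnnorm]
      rw [← ENNReal.rpow_add_of_nonneg _ _ (by norm_num) (by norm_num),
        show (1:ℝ)/2 + 1/2 = 1 by norm_num, ENNReal.rpow_one]
      exact lintegral_congr fun x => hpt2 (u x)
    calc N2 * N2 = ∫⁻ x : E³, ENNReal.ofReal (‖u x‖^2) := e3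
      _ ≤ ENNReal.ofReal (1/3) * ∫⁻ y : E³,
            ENNReal.ofReal (2 * ‖y‖ * ‖u y‖ * ‖fderiv ℝ u y‖) := hA
      _ ≤ ENNReal.ofReal (1/3) * (2 * (N2 * W)) := by gcongr
      _ = (ENNReal.ofReal (2/3) * W) * N2 := by
          have h23 : ENNReal.ofReal (1/3) * 2 = ENNReal.ofReal (2/3) := by
            rw [show (2:ℝ≥0∞) = ENNReal.ofReal 2 by simp, ← ENNReal.ofReal_mul (by norm_num)]
            norm_num
          rw [← mul_assoc, h23]
          ring
  by_cases hN0 : N2 = 0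
  · rw [hN0]; exact zero_le
  · have hNtop : N2 ≠ ∞ := (hu.continuous.memLp_of_hasCompactSupport h2u).eLpNorm_ne_top
    exact (ENNReal.mul_le_mul_iff_left hN0 hNtop).mp hsq

lemma interp (u : E³ → ℂ) (hu : ContDiff ℝ 1 u) :
    (∫⁻ x : E³, (‖u x‖₊ : ℝ≥0∞) ^ (12/5:ℝ)) ^ (5/6:ℝ) ≤
      (eLpNorm u 2 (volume : Measure E³)) ^ (3/2:ℝ) *
        (eLpNorm u 6 (volume : Measure E³)) ^ (1/2:ℝ) := by
  have ha : Measurable fun x : E³ => (‖u x‖₊ : ℝ≥0∞) :=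
    hu.continuous.measurable.nnnorm.coe_nnreal_ennreal
  have hH := ENNReal.lintegral_mul_le_Lp_mul_Lq (volume : Measure E³)
    (p := 10/9) (q := 10) ((Real.holderConjugate_iff_eq_conjExponent (by norm_num)).2 (by norm_num))
    (f := fun x : E³ => (‖u x‖₊ : ℝ≥0∞) ^ (9/5:ℝ))
    (g := fun x : E³ => (‖u x‖₊ : ℝ≥0∞) ^ (3/5:ℝ))
    ((ha.pow_const _).aemeasurable) ((ha.pow_const _).aemeasurable)
  have e0 : ∀ x : E³, ((fun x : E³ => (‖u x‖₊ : ℝ≥0∞) ^ (9/5:ℝ)) *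
      (fun x : E³ => (‖u x‖₊ : ℝ≥0∞) ^ (3/5:ℝ))) x = (‖u x‖₊ : ℝ≥0∞) ^ (12/5:ℝ) := by
    intro x
    simp only [Pi.mul_apply]
    rw [← ENNReal.rpow_add_of_nonneg _ _ (by norm_num) (by norm_num)]
    norm_num
  rw [lintegral_congr e0] at hH
  have e1 : ∀ x : E³, ((‖u x‖₊ : ℝ≥0∞) ^ (9/5:ℝ)) ^ (10/9:ℝ) = (‖u x‖₊ : ℝ≥0∞) ^ (2:ℝ) := by
    intro x; rw [← ENNReal.rpow_mul]; norm_num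
  have e2 : ∀ x : E³, ((‖u x‖₊ : ℝ≥0∞) ^ (3/5:ℝ)) ^ (10:ℝ) = (‖u x‖₊ : ℝ≥0∞) ^ (6:ℝ) := by
    intro x; rw [← ENNReal.rpow_mul]; norm_num
  simp_rw [e1, e2] at hH
  have hH2 := ENNReal.rpow_le_rpow hH (by norm_num : (0:ℝ) ≤ 5/6)
  rw [ENNReal.mul_rpow_of_nonneg _ _ (by norm_num)] at hH2
  rw [← ENNReal.rpow_mul, ← ENNReal.rpow_mul] at hH2
  refine le_trans hH2 ?_
  rw [eLpNorm_eq_lintegral_rpow_enorm_toReal two_ne_zero ENNReal.ofNat_ne_top,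
    eLpNorm_eq_lintegral_rpow_enorm_toReal (by norm_num) (by norm_num)]
  simp only [ENNReal.toReal_ofNat, enorm_eq_nnnorm]
  rw [← ENNReal.rpow_mul, ← ENNReal.rpow_mul]
  norm_num

end WeightedTrilinearAux

open WeightedTrilinearAux Module

set_option maxHeartbeats 1600000 in
/-- Weighted trilinear estimate:
`∫ (1+|x|)|u|³ ≤ C ‖u‖₂^{3/2} ‖∇u‖₂^{1/2} (‖∇u‖₂ + ‖|x|∇u‖₂)`. -/
theorem weighted_trilinear_estimate :
    ∃ C : ℝ, 0 < C ∧ ∀ u : E³ → ℂ, ContDiff ℝ 1 u → HasCompactSupport u →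
      ∫⁻ x : E³, ENNReal.ofReal ((1 + ‖x‖) * ‖u x‖ ^ 3) ≤
        ENNReal.ofReal C * (eLpNorm u 2 (volume : Measure E³)) ^ (3/2 : ℝ) *
          (eLpNorm (fderiv ℝ u) 2 (volume : Measure E³)) ^ (1/2 : ℝ) *
          (eLpNorm (fderiv ℝ u) 2 (volume : Measure E³) +
            eLpNorm (fun x : E³ => ‖x‖ * ‖fderiv ℝ u x‖) 2 (volume : Measure E³)) := by
  classical
  set SC : ℝ≥0 := SNormLESNormFDerivOfEqConst ℂ (volume : Measure E³) 2 with hSCdef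
  have sob : ∀ v : E³ → ℂ, ContDiff ℝ 1 v → HasCompactSupport v →
      eLpNorm v 6 (volume : Measure E³) ≤
        (SC : ℝ≥0∞) * eLpNorm (fderiv ℝ v) 2 (volume : Measure E³) := by
    intro v hv h2v
    have := eLpNorm_le_eLpNorm_fderiv_of_eq (u := v) (volume : Measure E³) hv h2v
      (p := 2) (p' := 6) (by norm_num) (by simp) ?_
    · exact_mod_cast this
    · simp; norm_num
  refine ⟨6 * ((SC:ℝ)+1)^(3/2:ℝ), by positivity, ?_⟩
  intro u hu h2u
  set N2 := eLpNorm u 2 (volume : Measure E³) with hN2def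
  set N6 := eLpNorm u 6 (volume : Measure E³) with hN6def
  set D := eLpNorm (fderiv ℝ u) 2 (volume : Measure E³) with hDdef
  set W := eLpNorm (fun x : E³ => ‖x‖ * ‖fderiv ℝ u x‖) 2 (volume : Measure E³) with hWdef
  have hcfd : Continuous (fderiv ℝ u) := hu.continuous_fderiv one_ne_zero
  have hN6D : N6 ≤ SC * D := sob u hu h2u
  have hN2W : N2 ≤ W := by
    refine le_trans (l2_bound u hu h2u) ?_
    calc ENNReal.ofReal (2/3) * W ≤ 1 * W := by
          gcongr
          exact ENNReal.ofReal_le_one.mpr (by norm_num)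
      _ = W := one_mul W
  -- bound for coordinate-weighted pieces
  have hvi : ∀ i : Fin 3, eLpNorm (fun x : E³ => (x i) • u x) 6 (volume : Measure E³) ≤
      SC * (N2 + W) := by
    intro i
    have hvic : ContDiff ℝ 1 (fun x : E³ => (x i) • u x) :=
      (ContDiff.smul ((EuclideanSpace.proj (𝕜 := ℝ) i).contDiff) hu)
    have h2vi : HasCompactSupport (fun x : E³ => (x i) • u x) := h2u.smul_left (f := fun x : E³ => x i)
    refine le_trans (sob _ hvic h2vi) ?_
    gcongr
    calc eLpNorm (fderiv ℝ fun x : E³ => (x i) • u x) 2 (volume : Measure E³)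
        ≤ eLpNorm ((fun x : E³ => ‖u x‖) + fun x : E³ => ‖x‖ * ‖fderiv ℝ u x‖) 2
            (volume : Measure E³) := by
          apply eLpNorm_mono_real
          intro x
          simp only [Pi.add_apply]
          exact fderiv_coord_smul_bound u hu i x
      _ ≤ eLpNorm (fun x : E³ => ‖u x‖) 2 (volume : Measure E³) + W :=
          eLpNorm_add_le (hu.continuous.norm.aestronglyMeasurable)
            ((continuous_norm.mul hcfd.norm).aestronglyMeasurable) one_le_two
      _ = N2 + W := by rw [eLpNorm_norm]
  -- triangle inequality for (1+‖x‖)u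
  have tri : eLpNorm (fun x : E³ => ((1 + ‖x‖ : ℝ) : ℂ) * u x) 6 (volume : Measure E³) ≤
      N6 + (SC * (N2+W) + (SC * (N2+W) + SC * (N2+W))) := by
    have hw : Continuous (fun x : E³ => ((‖x‖ : ℝ) : ℂ) * u x) :=
      (Complex.continuous_ofReal.comp continuous_norm).mul hu.continuous
    have hvw : (fun x : E³ => ((1 + ‖x‖ : ℝ) : ℂ) * u x) =
        u + fun x : E³ => ((‖x‖ : ℝ) : ℂ) * u x := by
      funext x; simp only [Pi.add_apply]; push_cast; ring
    have t1 : eLpNorm (fun x : E³ => ((1 + ‖x‖ : ℝ) : ℂ) * u x) 6 (volume : Measure E³) ≤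
        N6 + eLpNorm (fun x : E³ => ((‖x‖ : ℝ) : ℂ) * u x) 6 (volume : Measure E³) := by
      rw [hvw]
      exact eLpNorm_add_le hu.continuous.aestronglyMeasurable hw.aestronglyMeasurable
        (by norm_num)
    refine le_trans t1 ?_
    gcongr
    -- bound ‖x‖u by the three coordinate pieces
    have t2 : eLpNorm (fun x : E³ => ((‖x‖ : ℝ) : ℂ) * u x) 6 (volume : Measure E³) ≤
        eLpNorm ((fun x : E³ => ‖(x 0) • u x‖) + ((fun x : E³ => ‖(x 1) • u x‖) +
          (fun x : E³ => ‖(x 2) • u x‖))) 6 (volume : Measure E³) := by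
      apply eLpNorm_mono_real
      intro x
      simp only [Pi.add_apply]
      rw [norm_mul, Complex.norm_real, Real.norm_eq_abs, abs_norm]
      have h1 := norm_le_sum_coord x
      have h2 : ∀ i : Fin 3, ‖(x i) • u x‖ = |x i| * ‖u x‖ := by
        intro i; rw [norm_smul, Real.norm_eq_abs]
      rw [h2 0, h2 1, h2 2]
      have h3 : ‖x‖ * ‖u x‖ ≤ (∑ i : Fin 3, |x i|) * ‖u x‖ :=
        mul_le_mul_of_nonneg_right h1 (norm_nonneg _)
      rw [Fin.sum_univ_three] at h3
      linarith
    refine le_trans t2 ?_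
    have t3 : ∀ i : Fin 3, eLpNorm (fun x : E³ => ‖(x i) • u x‖) 6 (volume : Measure E³) =
        eLpNorm (fun x : E³ => (x i) • u x) 6 (volume : Measure E³) :=
      fun i => eLpNorm_norm _
    have hmi : ∀ i : Fin 3, Continuous (fun x : E³ => ‖(x i) • u x‖) := by
      intro i
      exact ((EuclideanSpace.proj (𝕜 := ℝ) i).continuous.smul hu.continuous).norm
    calc eLpNorm ((fun x : E³ => ‖(x 0) • u x‖) + ((fun x : E³ => ‖(x 1) • u x‖) +
          (fun x : E³ => ‖(x 2) • u x‖))) 6 (volume : Measure E³)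
        ≤ eLpNorm (fun x : E³ => ‖(x 0) • u x‖) 6 (volume : Measure E³) +
            eLpNorm ((fun x : E³ => ‖(x 1) • u x‖) + (fun x : E³ => ‖(x 2) • u x‖)) 6
              (volume : Measure E³) :=
          eLpNorm_add_le (hmi 0).aestronglyMeasurable
            ((hmi 1).add (hmi 2)).aestronglyMeasurable (by norm_num)
      _ ≤ eLpNorm (fun x : E³ => ‖(x 0) • u x‖) 6 (volume : Measure E³) +
            (eLpNorm (fun x : E³ => ‖(x 1) • u x‖) 6 (volume : Measure E³) +
              eLpNorm (fun x : E³ => ‖(x 2) • u x‖) 6 (volume : Measure E³)) := by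
          gcongr
          exact eLpNorm_add_le (hmi 1).aestronglyMeasurable (hmi 2).aestronglyMeasurable
            (by norm_num)
      _ ≤ SC * (N2+W) + (SC * (N2+W) + SC * (N2+W)) := by
          rw [t3 0, t3 1, t3 2]
          gcongr
          exacts [hvi 0, hvi 1, hvi 2]
  -- Hölder step
  have ha : Measurable fun x : E³ => (‖u x‖₊ : ℝ≥0∞) :=
    hu.continuous.measurable.nnnorm.coe_nnreal_ennreal
  have hgm : Measurable fun x : E³ => ENNReal.ofReal ((1 + ‖x‖) * ‖u x‖) := by
    apply ENNReal.measurable_ofReal.comp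
    exact ((continuous_const.add continuous_norm).mul hu.continuous.norm).measurable
  have holder : (∫⁻ x : E³, ENNReal.ofReal ((1 + ‖x‖) * ‖u x‖ ^ 3)) ≤
      (∫⁻ x : E³, (‖u x‖₊ : ℝ≥0∞) ^ (12/5:ℝ)) ^ (5/6:ℝ) *
        (∫⁻ x : E³, (ENNReal.ofReal ((1 + ‖x‖) * ‖u x‖)) ^ (6:ℝ)) ^ (1/6:ℝ) := by
    have hH := ENNReal.lintegral_mul_le_Lp_mul_Lq (volume : Measure E³)
      (p := 6/5) (q := 6) ((Real.holderConjugate_iff_eq_conjExponent (by norm_num)).2 (by norm_num))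
      (f := fun x : E³ => (‖u x‖₊ : ℝ≥0∞) ^ (2:ℝ))
      (g := fun x : E³ => ENNReal.ofReal ((1 + ‖x‖) * ‖u x‖))
      ((ha.pow_const _).aemeasurable) hgm.aemeasurable
    have e0 : ∀ x : E³, ((fun x : E³ => (‖u x‖₊ : ℝ≥0∞) ^ (2:ℝ)) *
        (fun x : E³ => ENNReal.ofReal ((1 + ‖x‖) * ‖u x‖))) x =
        ENNReal.ofReal ((1 + ‖x‖) * ‖u x‖ ^ 3) := by
      intro x
      simp only [Pi.mul_apply]
      rw [← enorm_eq_nnnorm, ← ofReal_norm,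
        ENNReal.ofReal_rpow_of_nonneg (norm_nonneg _) (by norm_num),
        ← ENNReal.ofReal_mul (by positivity)]
      congr 1
      rw [show ((2:ℝ)) = ((2:ℕ):ℝ) by norm_num, Real.rpow_natCast]
      ring
    rw [lintegral_congr e0] at hH
    have e1 : ∀ x : E³, ((‖u x‖₊ : ℝ≥0∞) ^ (2:ℝ)) ^ (6/5:ℝ) = (‖u x‖₊ : ℝ≥0∞) ^ (12/5:ℝ) := by
      intro x; rw [← ENNReal.rpow_mul]; norm_num
    simp_rw [e1] at hH
    rw [show (1:ℝ)/(6/5) = 5/6 by norm_num] at hH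
    exact hH
  have hterm2 : (∫⁻ x : E³, (ENNReal.ofReal ((1 + ‖x‖) * ‖u x‖)) ^ (6:ℝ)) ^ (1/6:ℝ) =
      eLpNorm (fun x : E³ => ((1 + ‖x‖ : ℝ) : ℂ) * u x) 6 (volume : Measure E³) := by
    rw [eLpNorm_eq_lintegral_rpow_enorm_toReal (by norm_num) (by norm_num)]
    simp only [ENNReal.toReal_ofNat, enorm_eq_nnnorm]
    congr 1
    apply lintegral_congr
    intro x
    congr 1
    rw [← enorm_eq_nnnorm, ← ofReal_norm, norm_mul, Complex.norm_real, Real.norm_eq_abs,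
      abs_of_nonneg (by positivity)]
  -- final assembly
  calc (∫⁻ x : E³, ENNReal.ofReal ((1 + ‖x‖) * ‖u x‖ ^ 3))
      ≤ (∫⁻ x : E³, (‖u x‖₊ : ℝ≥0∞) ^ (12/5:ℝ)) ^ (5/6:ℝ) *
          (∫⁻ x : E³, (ENNReal.ofReal ((1 + ‖x‖) * ‖u x‖)) ^ (6:ℝ)) ^ (1/6:ℝ) := holder
    _ ≤ (N2 ^ (3/2:ℝ) * N6 ^ (1/2:ℝ)) *
          (N6 + (SC * (N2+W) + (SC * (N2+W) + SC * (N2+W)))) := by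
        rw [hterm2]
        exact mul_le_mul' (interp u hu) tri
    _ ≤ (N2 ^ (3/2:ℝ) * ((SC:ℝ≥0∞) * D) ^ (1/2:ℝ)) *
          ((SC:ℝ≥0∞) * D + (SC * (W+W) + (SC * (W+W) + SC * (W+W)))) := by
        gcongr <;> first | exact hN6D | exact hN2W
    _ = ((SC:ℝ≥0∞) ^ (1/2:ℝ) * (SC:ℝ≥0∞)) * (N2 ^ (3/2:ℝ) * D ^ (1/2:ℝ) * (D + 6 * W)) := by
        rw [ENNReal.mul_rpow_of_nonneg _ _ (by norm_num)]
        ring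
    _ ≤ ((SC:ℝ≥0∞) ^ (1/2:ℝ) * (SC:ℝ≥0∞)) * (N2 ^ (3/2:ℝ) * D ^ (1/2:ℝ) * (6 * (D + W))) := by
        gcongr
        calc D + 6 * W ≤ 6 * D + 6 * W := by
              gcongr
              calc D = 1 * D := (one_mul D).symm
                _ ≤ 6 * D := by gcongr <;> norm_num
          _ = 6 * (D + W) := by ring
    _ = ((SC:ℝ≥0∞) ^ (3/2:ℝ) * 6) * (N2 ^ (3/2:ℝ) * D ^ (1/2:ℝ) * (D + W)) := by
        have hSC32 : (SC:ℝ≥0∞) ^ (1/2:ℝ) * (SC:ℝ≥0∞) = (SC:ℝ≥0∞) ^ (3/2:ℝ) := by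
          rw [show (3/2:ℝ) = 1/2 + 1 by norm_num,
            ENNReal.rpow_add_of_nonneg _ _ (by norm_num) (by norm_num), ENNReal.rpow_one]
        rw [← hSC32]
        ring
    _ ≤ ENNReal.ofReal (6 * ((SC:ℝ)+1)^(3/2:ℝ)) * (N2 ^ (3/2:ℝ) * D ^ (1/2:ℝ) * (D + W)) := by
        gcongr
        rw [ENNReal.ofReal_mul (by norm_num), ENNReal.ofReal_ofNat,
          ← ENNReal.ofReal_rpow_of_nonneg (by positivity) (by norm_num),
          ENNReal.ofReal_add (by positivity) zero_le_one, ENNReal.ofReal_coe_nnreal,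
          ENNReal.ofReal_one, mul_comm]
        gcongr
        exact le_self_add
    _ = ENNReal.ofReal (6 * ((SC:ℝ)+1)^(3/2:ℝ)) * N2 ^ (3/2:ℝ) * D ^ (1/2:ℝ) * (D + W) := by
        ring
end
end
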